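/- Let W be a symmetric matrix with nonnegative entries, η₁, η₂ > 0, 0 < v₁ < 1 < v₂, and f_i : ℝ → ℝ twice differentiable with ψ_i(x) = f_i'(x_i). Along any solution x(t) of ẋ_i = −∑_j W_{ij}(η₁ sgn^{v₁}(ψ_i − ψ_j) + η₂ sgn^{v₂}(ψ_i − ψ_j)), the total cost F(x) = ∑_i f_i(x_i) satisfies d/dt F(x(t)) = −(η₁/2) ∑_{i,j} W_{ij}|ψ_i − ψ_j|^{v₁+1} − (η₂/2) ∑_{i,j} W_{ij}|ψ_i − ψ_j|^{v₂+1} ≤ 0. -/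

import Mathlib

noncomputable def sgnPow (v x : ℝ) : ℝ := if x = 0 then 0 else x * |x| ^ (v - 1)

/-!
Along the flow, `d/dt F(x(t)) = ∑ᵢ ψᵢ ẋᵢ`. Since `W` is symmetric and `sgn^v` is odd, swapping
`i` and `j` turns `∑ᵢⱼ Wᵢⱼ ψᵢ sgn^v(ψᵢ - ψⱼ)` into half of `∑ᵢⱼ Wᵢⱼ (ψᵢ - ψⱼ) sgn^v(ψᵢ - ψⱼ)`,
and `y sgn^v(y) = |y|^(v+1)`. Both resulting sums are nonnegative because `W ≥ 0`.
-/

open Finset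

lemma sgnPow_neg (v x : ℝ) : sgnPow v (-x) = -sgnPow v x := by
  unfold sgnPow
  rcases eq_or_ne x 0 with rfl | hx
  · simp
  · rw [if_neg (neg_ne_zero.mpr hx), if_neg hx, abs_neg]
    ring

lemma mul_sgnPow_self {v : ℝ} (hv : v + 1 ≠ 0) (x : ℝ) : x * sgnPow v x = |x| ^ (v + 1) := by
  unfold sgnPow
  rcases eq_or_ne x 0 with rfl | hx
  · simp [Real.zero_rpow hv]
  · have hx' : |x| ≠ 0 := abs_ne_zero.mpr hx
    rw [if_neg hx, show v + 1 = v - 1 + 1 + 1 by ring, Real.rpow_add_one hx',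
      Real.rpow_add_one hx', mul_assoc, abs_mul_abs_self]
    ring

lemma sum_sum_mul_odd_of_symm {ι : Type*} [Fintype ι] {W : ι → ι → ℝ}
    (hW : ∀ i j, W i j = W j i) {g : ℝ → ℝ} (hg : ∀ y, g (-y) = -g y) (p : ι → ℝ) :
    ∑ i, ∑ j, W i j * (p i * g (p i - p j)) =
      (1 / 2) * ∑ i, ∑ j, W i j * ((p i - p j) * g (p i - p j)) := by
  have swap : ∑ i, ∑ j, W i j * (p i * g (p i - p j)) =
      -∑ i, ∑ j, W i j * (p j * g (p i - p j)) := by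
    rw [sum_comm, ← sum_neg_distrib]
    refine sum_congr rfl fun i _ => ?_
    rw [← sum_neg_distrib]
    refine sum_congr rfl fun j _ => ?_
    rw [hW j i, show p j - p i = -(p i - p j) by ring, hg]
    ring
  have split : ∑ i, ∑ j, W i j * ((p i - p j) * g (p i - p j)) =
      ∑ i, ∑ j, W i j * (p i * g (p i - p j)) - ∑ i, ∑ j, W i j * (p j * g (p i - p j)) := by
    rw [← sum_sub_distrib]
    refine sum_congr rfl fun i _ => ?_
    rw [← sum_sub_distrib]
    exact sum_congr rfl fun j _ => by ring
  linarith

lemma sum_sum_mul_sgnPow_of_symm {ι : Type*} [Fintype ι] {W : ι → ι → ℝ}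
    (hW : ∀ i j, W i j = W j i) {v : ℝ} (hv : v + 1 ≠ 0) (p : ι → ℝ) :
    ∑ i, ∑ j, W i j * (p i * sgnPow v (p i - p j)) =
      (1 / 2) * ∑ i, ∑ j, W i j * |p i - p j| ^ (v + 1) := by
  simp only [sum_sum_mul_odd_of_symm hW (sgnPow_neg v) p, mul_sgnPow_self hv]

lemma sum_sum_mul_abs_rpow_nonneg {ι : Type*} [Fintype ι] {W : ι → ι → ℝ}
    (hW : ∀ i j, 0 ≤ W i j) (p : ι → ℝ) (a : ℝ) :
    0 ≤ ∑ i, ∑ j, W i j * |p i - p j| ^ a :=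
  sum_nonneg fun i _ => sum_nonneg fun j _ =>
    mul_nonneg (hW i j) (Real.rpow_nonneg (abs_nonneg _) a)

lemma hasDerivAt_sum_comp {ι : Type*} [Fintype ι] {f : ι → ℝ → ℝ} {x : ℝ → ι → ℝ}
    {x' : ι → ℝ} {t : ℝ} (hf : ∀ i, DifferentiableAt ℝ (f i) (x t i))
    (hx : ∀ i, HasDerivAt (fun s => x s i) (x' i) t) :
    HasDerivAt (fun s => ∑ i, f i (x s i)) (∑ i, deriv (f i) (x t i) * x' i) t :=
  HasDerivAt.fun_sum fun i _ => (hf i).hasDerivAt.comp t (hx i)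

lemma sum_mul_neg_sum_sgnPow_of_symm {ι : Type*} [Fintype ι] {W : ι → ι → ℝ}
    (hW : ∀ i j, W i j = W j i) {η₁ η₂ v₁ v₂ : ℝ} (hv₁ : v₁ + 1 ≠ 0) (hv₂ : v₂ + 1 ≠ 0)
    (p : ι → ℝ) :
    ∑ i, p i * -(∑ j, W i j * (η₁ * sgnPow v₁ (p i - p j) + η₂ * sgnPow v₂ (p i - p j))) =
      -(η₁ / 2) * ∑ i, ∑ j, W i j * |p i - p j| ^ (v₁ + 1)
        - (η₂ / 2) * ∑ i, ∑ j, W i j * |p i - p j| ^ (v₂ + 1) := by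
  have expand : ∑ i, p i * -(∑ j, W i j * (η₁ * sgnPow v₁ (p i - p j)
        + η₂ * sgnPow v₂ (p i - p j))) =
      -η₁ * ∑ i, ∑ j, W i j * (p i * sgnPow v₁ (p i - p j))
        - η₂ * ∑ i, ∑ j, W i j * (p i * sgnPow v₂ (p i - p j)) := by
    simp only [mul_sum, ← sum_sub_distrib, mul_neg, ← sum_neg_distrib]
    exact sum_congr rfl fun i _ => sum_congr rfl fun j _ => by ring
  rw [expand, sum_sum_mul_sgnPow_of_symm hW hv₁, sum_sum_mul_sgnPow_of_symm hW hv₂]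
  ring

theorem lyapunov_derivative_general (n : ℕ) (W : Matrix (Fin n) (Fin n) ℝ)
    (hWsym : ∀ i j, W i j = W j i) (hWnn : ∀ i j, 0 ≤ W i j)
    (η₁ η₂ v₁ v₂ : ℝ) (hη₁ : 0 < η₁) (hη₂ : 0 < η₂)
    (hv₁ : 0 < v₁) (hv₂ : 1 < v₂)
    (f : Fin n → ℝ → ℝ) (hf : ∀ i, ContDiff ℝ 2 (f i))
    (x : ℝ → Fin n → ℝ)
    (ψ : ℝ → Fin n → ℝ) (hψ : ∀ t i, ψ t i = deriv (f i) (x t i))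
    (hode : ∀ t i, HasDerivAt (fun s => x s i)
      (-(∑ j, W i j * (η₁ * sgnPow v₁ (ψ t i - ψ t j) +
                        η₂ * sgnPow v₂ (ψ t i - ψ t j)))) t) :
    ∀ t : ℝ,
      HasDerivAt (fun s => ∑ i, f i (x s i))
        (-(η₁ / 2) * ∑ i, ∑ j, W i j * |ψ t i - ψ t j| ^ (v₁ + 1)
         - (η₂ / 2) * ∑ i, ∑ j, W i j * |ψ t i - ψ t j| ^ (v₂ + 1)) t ∧
      (-(η₁ / 2) * ∑ i, ∑ j, W i j * |ψ t i - ψ t j| ^ (v₁ + 1)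
         - (η₂ / 2) * ∑ i, ∑ j, W i j * |ψ t i - ψ t j| ^ (v₂ + 1)) ≤ 0 := by
  intro t
  refine ⟨?_, ?_⟩
  · have hF := hasDerivAt_sum_comp (fun i => (hf i).differentiable two_ne_zero _) (hode t)
    simp only [← hψ t] at hF
    rwa [sum_mul_neg_sum_sgnPow_of_symm hWsym (by linarith) (by linarith)] at hF
  · have h₁ := sum_sum_mul_abs_rpow_nonneg hWnn (ψ t) (v₁ + 1)
    have h₂ := sum_sum_mul_abs_rpow_nonneg hWnn (ψ t) (v₂ + 1)
    nlinarith

theorem lyapunov_derivative (n : ℕ) (W : Matrix (Fin n) (Fin n) ℝ)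
    (hWsym : ∀ i j, W i j = W j i) (hWnn : ∀ i j, 0 ≤ W i j)
    (η₁ η₂ v₁ v₂ : ℝ) (hη₁ : 0 < η₁) (hη₂ : 0 < η₂)
    (hv₁ : 0 < v₁) (hv₁' : v₁ < 1) (hv₂ : 1 < v₂)
    (f : Fin n → ℝ → ℝ) (hf : ∀ i, ContDiff ℝ 2 (f i))
    (x : ℝ → Fin n → ℝ)
    (ψ : ℝ → Fin n → ℝ) (hψ : ∀ t i, ψ t i = deriv (f i) (x t i))
    (hode : ∀ t i, HasDerivAt (fun s => x s i)
      (-(∑ j, W i j * (η₁ * sgnPow v₁ (ψ t i - ψ t j) +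
                        η₂ * sgnPow v₂ (ψ t i - ψ t j)))) t) :
    ∀ t : ℝ,
      HasDerivAt (fun s => ∑ i, f i (x s i))
        (-(η₁ / 2) * ∑ i, ∑ j, W i j * |ψ t i - ψ t j| ^ (v₁ + 1)
         - (η₂ / 2) * ∑ i, ∑ j, W i j * |ψ t i - ψ t j| ^ (v₂ + 1)) t ∧
      (-(η₁ / 2) * ∑ i, ∑ j, W i j * |ψ t i - ψ t j| ^ (v₁ + 1)
         - (η₂ / 2) * ∑ i, ∑ j, W i j * |ψ t i - ψ t j| ^ (v₂ + 1)) ≤ 0 :=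
  lyapunov_derivative_general n W hWsym hWnn η₁ η₂ v₁ v₂ hη₁ hη₂ hv₁ hv₂ f hf x ψ hψ hode
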